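/- The linear map Π := −s⁺∘s⁻ on 𝒩 is an idempotent (Π∘Π = Π), it equals −s⁻∘s⁺, it satisfies Π(x) = x for every x ∈ Λ*E and Π(K·x) = 0 for every x ∈ Λ*E; hence the image of Π is Λ*E and the kernel of Π is K·Λ*E = span{K, Kθ, Kθ̄, Kρ}. -/

import Mathlib

/-
Both maps `s^±` vanish on `K·Λ*E` and act on `Λ*E` by `1 ↦ -ρ`, `ρ ↦ 1`, `θ ↦ ∓θ`, `θ̄ ↦ ∓θ̄`;
this is a direct computation in the basis, using that `μ₀` only sees the coefficient of `ρ`.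
Hence each of `-s⁺∘s⁻` and `-s⁻∘s⁺` is the identity on `Λ*E` and zero on `K·Λ*E`. Since `Λ*E`
and `K·Λ*E` together span `𝒩` (their sum is stable under left multiplication by the generators),
both composites equal the projection of `𝒩 = Λ*E ⊕ K·Λ*E` onto `Λ*E`.
-/

noncomputable section

open TensorProduct

/-- The quadratic form `q(x₀,x₁,x₂) = x₀²` on `ℝ³`. -/
def Nform : QuadraticForm ℝ (Fin 3 → ℝ) :=
  QuadraticMap.weightedSumSquares ℝ (fun i : Fin 3 => if i = 0 then (1 : ℝ) else 0)

/-- The algebra `𝒩 = ℤ/2 ⋉ Λ*ℝ²`, realized as the Clifford algebra of `Nform`. -/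
abbrev NA := CliffordAlgebra Nform

/-- The generator `K`. -/
def K : NA := CliffordAlgebra.ι Nform (Pi.single 0 1)

/-- The generator `θ`. -/
def θ : NA := CliffordAlgebra.ι Nform (Pi.single 1 1)

/-- The generator `θ̄`. -/
def θb : NA := CliffordAlgebra.ι Nform (Pi.single 2 1)

/-- `ρ := θ̄θ`. -/
def ρ : NA := θb * θ

/-- `ℳ⁺ := 1⊗1 + (Kθ̄⊗θ + θK⊗θ̄) − ρ⊗ρ`. -/
def MonoP : NA ⊗[ℝ] NA := 1 + (K * θb) ⊗ₜ[ℝ] θ + (θ * K) ⊗ₜ[ℝ] θb - ρ ⊗ₜ[ℝ] ρ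

/-- `ℳ⁻ := 1⊗1 − (Kθ̄⊗θ + θK⊗θ̄) − ρ⊗ρ`. -/
def MonoM : NA ⊗[ℝ] NA := 1 - (K * θb) ⊗ₜ[ℝ] θ - (θ * K) ⊗ₜ[ℝ] θb - ρ ⊗ₜ[ℝ] ρ

/-- `Λ*E`, the subalgebra of `𝒩` spanned by `1, θ, θ̄, ρ`. -/
def ΛE : Submodule ℝ NA := Submodule.span ℝ {1, θ, θb, ρ}

/-- Given the functional `μ₀`, the antipode `S` and an element `m = Σ_j m_j ⊗ n_j` of
`𝒩⊗𝒩`, this is the map `x ↦ Σ_j μ₀(S(x)·m_j)·n_j` (expressed basis-freely). -/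
def sMap (μ₀ : NA →ₗ[ℝ] ℝ) (S : NA →ₗ[ℝ] NA) (m : NA ⊗[ℝ] NA) (x : NA) : NA :=
  (TensorProduct.lid ℝ NA)
    (LinearMap.rTensor NA (μ₀ ∘ₗ LinearMap.mulLeft ℝ (S x)) m)

namespace LinearMap

variable {R M : Type*} [Semiring R] [AddCommMonoid M] [Module R M] {P : M →ₗ[R] M}
  {A B : Submodule R M}

theorem range_eq_of_codisjoint (hAB : Codisjoint A B) (hA : ∀ a ∈ A, P a = a)
    (hB : ∀ b ∈ B, P b = 0) : range P = A := by
  refine le_antisymm ?_ fun a ha ↦ ⟨a, hA a ha⟩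
  rintro _ ⟨x, rfl⟩
  obtain ⟨a, ha, b, hb, rfl⟩ := Submodule.mem_sup.1 (hAB.eq_top ▸ Submodule.mem_top : x ∈ A ⊔ B)
  rwa [map_add, hA a ha, hB b hb, add_zero]

theorem ker_eq_of_codisjoint (hAB : Codisjoint A B) (hA : ∀ a ∈ A, P a = a)
    (hB : ∀ b ∈ B, P b = 0) : ker P = B := by
  refine le_antisymm (fun x hx ↦ ?_) hB
  obtain ⟨a, ha, b, hb, rfl⟩ := Submodule.mem_sup.1 (hAB.eq_top ▸ Submodule.mem_top : x ∈ A ⊔ B)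
  rw [mem_ker, map_add, hA a ha, hB b hb, add_zero] at hx
  rwa [hx, zero_add]

end LinearMap

lemma Nform_apply (v : Fin 3 → ℝ) : Nform v = v 0 * v 0 := by
  simp [Nform]

lemma Nform_isOrtho_single {i j : Fin 3} (h : i ≠ j) :
    Nform.IsOrtho (Pi.single i 1) (Pi.single j 1) := by
  rw [QuadraticMap.isOrtho_def]
  fin_cases i <;> fin_cases j <;> simp_all [Nform_apply]

/- The simp lemmas below order monomials as `K`, `θb`, `θ`; proofs unfold `ρ` to `θb * θ` to
reach this normal form. -/
@[simp] lemma K_mul_K : K * K = 1 := by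
  simp [K, CliffordAlgebra.ι_sq_scalar, Nform_apply]

@[simp] lemma θ_mul_θ : θ * θ = 0 := by
  simp [θ, CliffordAlgebra.ι_sq_scalar, Nform_apply]

@[simp] lemma θb_mul_θb : θb * θb = 0 := by
  simp [θb, CliffordAlgebra.ι_sq_scalar, Nform_apply]

@[simp] lemma θ_mul_K : θ * K = -(K * θ) :=
  CliffordAlgebra.ι_mul_ι_comm_of_isOrtho (Nform_isOrtho_single (by decide))

@[simp] lemma θb_mul_K : θb * K = -(K * θb) :=
  CliffordAlgebra.ι_mul_ι_comm_of_isOrtho (Nform_isOrtho_single (by decide))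

@[simp] lemma θ_mul_θb : θ * θb = -(θb * θ) :=
  CliffordAlgebra.ι_mul_ι_comm_of_isOrtho (Nform_isOrtho_single (by decide))

@[simp] lemma K_mul_K_mul (x : NA) : K * (K * x) = x := by
  rw [← mul_assoc, K_mul_K, one_mul]

@[simp] lemma θ_mul_θ_mul (x : NA) : θ * (θ * x) = 0 := by
  rw [← mul_assoc, θ_mul_θ, zero_mul]

@[simp] lemma θb_mul_θb_mul (x : NA) : θb * (θb * x) = 0 := by
  rw [← mul_assoc, θb_mul_θb, zero_mul]

@[simp] lemma θ_mul_K_mul (x : NA) : θ * (K * x) = -(K * (θ * x)) := by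
  rw [← mul_assoc, θ_mul_K, neg_mul, mul_assoc]

@[simp] lemma θb_mul_K_mul (x : NA) : θb * (K * x) = -(K * (θb * x)) := by
  rw [← mul_assoc, θb_mul_K, neg_mul, mul_assoc]

@[simp] lemma θ_mul_θb_mul (x : NA) : θ * (θb * x) = -(θb * (θ * x)) := by
  rw [← mul_assoc, θ_mul_θb, neg_mul, mul_assoc]

def KΛE : Submodule ℝ NA := Submodule.span ℝ {K, K * θ, K * θb, K * ρ}

lemma K_mul_mem_KΛE {x : NA} (hx : x ∈ ΛE) : K * x ∈ KΛE := by
  refine (Submodule.map_span_le (LinearMap.mulLeft ℝ K) _ _).2 ?_ (Submodule.mem_map_of_mem hx)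
  rintro _ (rfl | rfl | rfl | rfl) <;> simp [KΛE, Submodule.mem_span_of_mem]

lemma generator_mul_mem_ΛE_sup_KΛE {g x : NA} (hg : g ∈ ({K, θ, θb} : Set NA))
    (hx : x ∈ ΛE ⊔ KΛE) : g * x ∈ ΛE ⊔ KΛE := by
  rw [ΛE, KΛE, ← Submodule.span_union] at hx ⊢
  refine (Submodule.map_span_le (LinearMap.mulLeft ℝ g) _ _).2 ?_ (Submodule.mem_map_of_mem hx)
  intro b hb
  rcases hg with rfl | rfl | rfl <;>
    rcases hb with (rfl | rfl | rfl | rfl) | (rfl | rfl | rfl | rfl) <;>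
    simp [ρ, Submodule.mem_span_of_mem]

lemma codisjoint_ΛE_KΛE : Codisjoint ΛE KΛE := by
  refine codisjoint_iff.2 <| Submodule.eq_top_iff'.2 fun x ↦ ?_
  induction x using CliffordAlgebra.left_induction with
  | algebraMap r =>
    rw [Algebra.algebraMap_eq_smul_one]
    exact Submodule.mem_sup_left (Submodule.smul_mem _ r (Submodule.subset_span (by simp)))
  | add x y hx hy => exact add_mem hx hy
  | ι_mul x v hx =>
    have hv : CliffordAlgebra.ι Nform v = v 0 • K + v 1 • θ + v 2 • θb := by
      rw [K, θ, θb, ← map_smul, ← map_smul, ← map_smul, ← map_add, ← map_add]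
      congr 1
      ext i; fin_cases i <;> simp
    rw [hv, add_mul, add_mul, smul_mul_assoc, smul_mul_assoc, smul_mul_assoc]
    exact add_mem (add_mem
      (Submodule.smul_mem _ _ (generator_mul_mem_ΛE_sup_KΛE (by simp) hx))
      (Submodule.smul_mem _ _ (generator_mul_mem_ΛE_sup_KΛE (by simp) hx)))
      (Submodule.smul_mem _ _ (generator_mul_mem_ΛE_sup_KΛE (by simp) hx))

section Antipode

variable {S : NA →ₗ[ℝ] NA} (hSmul : ∀ x y : NA, S (x * y) = S y * S x)
  (hSK : S K = K) (hSθ : S θ = -(K * θ)) (hSθb : S θb = -(K * θb))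
include hSmul

include hSK in
lemma antipode_one : S 1 = 1 := by
  simpa [hSK] using hSmul K K

include hSθ hSθb in
lemma antipode_ρ : S ρ = ρ := by
  simp [ρ, hSmul, hSθ, hSθb, mul_assoc]

include hSK hSθ in
lemma antipode_K_mul_θ : S (K * θ) = θ := by
  simp [hSmul, hSK, hSθ, mul_assoc]

include hSK hSθb in
lemma antipode_K_mul_θb : S (K * θb) = θb := by
  simp [hSmul, hSK, hSθb, mul_assoc]

include hSK hSθ hSθb in
lemma antipode_K_mul_ρ : S (K * ρ) = K * ρ := by
  rw [hSmul, antipode_ρ hSmul hSθ hSθb, hSK]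
  simp [ρ, mul_assoc]

end Antipode

def sMapₗ (μ₀ : NA →ₗ[ℝ] ℝ) (S : NA →ₗ[ℝ] NA) (m : NA ⊗[ℝ] NA) : NA →ₗ[ℝ] NA :=
  (TensorProduct.lid ℝ NA).toLinearMap ∘ₗ LinearMap.applyₗ m ∘ₗ LinearMap.rTensorHom NA ∘ₗ
    LinearMap.llcomp ℝ NA NA ℝ μ₀ ∘ₗ LinearMap.mul ℝ NA ∘ₗ S

lemma sMapₗ_apply (μ₀ : NA →ₗ[ℝ] ℝ) (S : NA →ₗ[ℝ] NA) (m : NA ⊗[ℝ] NA) (x : NA) :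
    sMapₗ μ₀ S m x = sMap μ₀ S m x := rfl

def Mono (ε : ℝ) : NA ⊗[ℝ] NA := 1 + ε • ((K * θb) ⊗ₜ[ℝ] θ + (θ * K) ⊗ₜ[ℝ] θb) - ρ ⊗ₜ[ℝ] ρ

lemma MonoP_eq : MonoP = Mono 1 := by
  rw [MonoP, Mono, one_smul, add_assoc]

lemma MonoM_eq : MonoM = Mono (-1) := by
  rw [MonoM, Mono, neg_one_smul, neg_add]; abel

lemma sMapₗ_Mono_apply (μ₀ : NA →ₗ[ℝ] ℝ) (S : NA →ₗ[ℝ] NA) (ε : ℝ) (x : NA) :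
    sMapₗ μ₀ S (Mono ε) x = μ₀ (S x) • (1 : NA)
      + ε • (μ₀ (S x * (K * θb)) • θ + μ₀ (S x * (θ * K)) • θb) - μ₀ (S x * ρ) • ρ := by
  simp only [sMapₗ_apply, sMap, Mono, Algebra.TensorProduct.one_def, map_add, map_sub, map_smul,
    LinearMap.rTensor_tmul, TensorProduct.lid_tmul, LinearMap.coe_comp,
    Function.comp_apply, LinearMap.mulLeft_apply, mul_one]

def sProj (μ₀ : NA →ₗ[ℝ] ℝ) (S : NA →ₗ[ℝ] NA) (ε ε' : ℝ) : NA →ₗ[ℝ] NA :=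
  -(sMapₗ μ₀ S (Mono ε) ∘ₗ sMapₗ μ₀ S (Mono ε'))

section Values

variable {S : NA →ₗ[ℝ] NA} (hSmul : ∀ x y : NA, S (x * y) = S y * S x)
  (hSK : S K = K) (hSθ : S θ = -(K * θ)) (hSθb : S θb = -(K * θb))
  {μ₀ : NA →ₗ[ℝ] ℝ} (hμ1 : μ₀ 1 = 0) (hμθ : μ₀ θ = 0) (hμθb : μ₀ θb = 0) (hμρ : μ₀ ρ = 1)
  (hμK : μ₀ K = 0) (hμKθ : μ₀ (K * θ) = 0) (hμKθb : μ₀ (K * θb) = 0) (hμKρ : μ₀ (K * ρ) = 0)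
  (ε : ℝ)

include hSmul hSK hμ1 hμρ hμKθ hμKθb in
lemma sMapₗ_Mono_one : sMapₗ μ₀ S (Mono ε) 1 = -ρ := by
  rw [sMapₗ_Mono_apply, antipode_one hSmul hSK]
  simp [hμ1, hμρ, hμKθ, hμKθb]

include hSθ hμρ hμKθ in
lemma sMapₗ_Mono_θ : sMapₗ μ₀ S (Mono ε) θ = -(ε • θ) := by
  rw [sMapₗ_Mono_apply, hSθ]
  simp only [ρ] at hμρ ⊢
  simp [mul_assoc, hμρ, hμKθ]

include hSθb hμρ hμKθb in
lemma sMapₗ_Mono_θb : sMapₗ μ₀ S (Mono ε) θb = -(ε • θb) := by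
  rw [sMapₗ_Mono_apply, hSθb]
  simp only [ρ] at hμρ ⊢
  simp [mul_assoc, hμρ, hμKθb]

include hSmul hSθ hSθb hμρ in
lemma sMapₗ_Mono_ρ : sMapₗ μ₀ S (Mono ε) ρ = 1 := by
  rw [sMapₗ_Mono_apply, antipode_ρ hSmul hSθ hSθb]
  simp only [ρ] at hμρ ⊢
  simp [mul_assoc, hμρ]

include hSK hμK hμθ hμθb hμKρ in
lemma sMapₗ_Mono_K : sMapₗ μ₀ S (Mono ε) K = 0 := by
  rw [sMapₗ_Mono_apply, hSK]
  simp only [ρ] at hμKρ ⊢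
  simp [hμK, hμθ, hμθb, hμKρ]

include hSmul hSK hSθ hμθ hμKρ in
lemma sMapₗ_Mono_K_mul_θ : sMapₗ μ₀ S (Mono ε) (K * θ) = 0 := by
  rw [sMapₗ_Mono_apply, antipode_K_mul_θ hSmul hSK hSθ]
  simp only [ρ] at hμKρ ⊢
  simp [hμθ, hμKρ]

include hSmul hSK hSθb hμθb hμKρ in
lemma sMapₗ_Mono_K_mul_θb : sMapₗ μ₀ S (Mono ε) (K * θb) = 0 := by
  rw [sMapₗ_Mono_apply, antipode_K_mul_θb hSmul hSK hSθb]
  simp only [ρ] at hμKρ ⊢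
  simp [hμθb, hμKρ]

include hSmul hSK hSθ hSθb hμKρ in
lemma sMapₗ_Mono_K_mul_ρ : sMapₗ μ₀ S (Mono ε) (K * ρ) = 0 := by
  rw [sMapₗ_Mono_apply, antipode_K_mul_ρ hSmul hSK hSθ hSθb]
  simp only [ρ] at hμKρ ⊢
  simp [mul_assoc, hμKρ]

include hSmul hSK hSθ hSθb hμ1 hμρ hμKθ hμKθb in
lemma sProj_apply_of_mem_ΛE {ε' : ℝ} (h : ε * ε' = -1) : ∀ x ∈ ΛE, sProj μ₀ S ε ε' x = x := by
  refine fun x hx ↦ LinearMap.eqOn_span' (f := sProj μ₀ S ε ε') (g := LinearMap.id) ?_ hx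
  rintro _ (rfl | rfl | rfl | rfl) <;>
    simp [sProj, sMapₗ_Mono_one, sMapₗ_Mono_θ, sMapₗ_Mono_θb, sMapₗ_Mono_ρ, smul_smul,
      mul_comm ε' ε, *]

include hSmul hSK hSθ hSθb hμθ hμθb hμK hμKρ in
lemma sProj_apply_of_mem_KΛE (ε' : ℝ) : ∀ x ∈ KΛE, sProj μ₀ S ε ε' x = 0 := by
  refine fun x hx ↦ LinearMap.eqOn_span' (f := sProj μ₀ S ε ε') (g := 0) ?_ hx
  rintro _ (rfl | rfl | rfl | rfl) <;>
    simp [sProj, sMapₗ_Mono_K, sMapₗ_Mono_K_mul_θ, sMapₗ_Mono_K_mul_θb, sMapₗ_Mono_K_mul_ρ, *]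

end Values

theorem stmt12_general
    (S : NA →ₗ[ℝ] NA) (hSmul : ∀ x y : NA, S (x * y) = S y * S x)
    (hSK : S K = K) (hSθ : S θ = -(K * θ)) (hSθb : S θb = -(K * θb))
    (μ₀ : NA →ₗ[ℝ] ℝ)
    (hμ1 : μ₀ 1 = 0) (hμθ : μ₀ θ = 0) (hμθb : μ₀ θb = 0) (hμρ : μ₀ ρ = 1)
    (hμK : μ₀ K = 0) (hμKθ : μ₀ (K * θ) = 0) (hμKθb : μ₀ (K * θb) = 0)
    (hμKρ : μ₀ (K * ρ) = 0) :
    ∀ Pr : NA → NA,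
      Pr = (fun x => -(sMap μ₀ S MonoP (sMap μ₀ S MonoM x))) →
      (∀ x : NA, Pr (Pr x) = Pr x) ∧
      (∀ x : NA, Pr x = -(sMap μ₀ S MonoM (sMap μ₀ S MonoP x))) ∧
      (∀ x ∈ ΛE, Pr x = x) ∧
      (∀ x ∈ ΛE, Pr (K * x) = 0) ∧
      Set.range Pr = (ΛE : Set NA) ∧
      {x : NA | Pr x = 0} = (Submodule.span ℝ {K, K * θ, K * θb, K * ρ} : Set NA) := by
  rintro _ rfl
  rw [MonoP_eq, MonoM_eq, show (fun x ↦ -sMap μ₀ S (Mono 1) (sMap μ₀ S (Mono (-1)) x)) =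
    sProj μ₀ S 1 (-1) from rfl]
  have hP := sProj_apply_of_mem_ΛE hSmul hSK hSθ hSθb hμ1 hμρ hμKθ hμKθb 1
    (ε' := -1) (by norm_num)
  have hP₀ := sProj_apply_of_mem_KΛE hSmul hSK hSθ hSθb hμθ hμθb hμK hμKρ 1 (-1)
  have hQ := sProj_apply_of_mem_ΛE hSmul hSK hSθ hSθb hμ1 hμρ hμKθ hμKθb (-1)
    (ε' := 1) (by norm_num)
  have hQ₀ := sProj_apply_of_mem_KΛE hSmul hSK hSθ hSθb hμθ hμθb hμK hμKρ (-1) 1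
  have hrange := LinearMap.range_eq_of_codisjoint codisjoint_ΛE_KΛE hP hP₀
  have hPQ := LinearMap.ext_on_codisjoint codisjoint_ΛE_KΛE
    (fun x hx ↦ (hP x hx).trans (hQ x hx).symm) (fun x hx ↦ (hP₀ x hx).trans (hQ₀ x hx).symm)
  refine ⟨fun x ↦ hP _ (hrange ▸ LinearMap.mem_range_self _ x), fun x ↦ LinearMap.congr_fun hPQ x,
    hP, fun x hx ↦ hP₀ _ (K_mul_mem_KΛE hx), congrArg SetLike.coe hrange,
    congrArg SetLike.coe (LinearMap.ker_eq_of_codisjoint codisjoint_ΛE_KΛE hP hP₀)⟩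

/-- the map `Pr := −s⁺∘s⁻` is idempotent, equals `−s⁻∘s⁺`, fixes every
element of `Λ*E` and kills `K·Λ*E`; its image is `Λ*E` and its kernel is
`K·Λ*E = span{K, Kθ, Kθ̄, Kρ}`. -/
theorem stmt12
    (S : NA →ₗ[ℝ] NA) (hS1 : S 1 = 1) (hSmul : ∀ x y : NA, S (x * y) = S y * S x)
    (hSK : S K = K) (hSθ : S θ = -(K * θ)) (hSθb : S θb = -(K * θb))
    (μ₀ : NA →ₗ[ℝ] ℝ)
    (hμ1 : μ₀ 1 = 0) (hμθ : μ₀ θ = 0) (hμθb : μ₀ θb = 0) (hμρ : μ₀ ρ = 1)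
    (hμK : μ₀ K = 0) (hμKθ : μ₀ (K * θ) = 0) (hμKθb : μ₀ (K * θb) = 0)
    (hμKρ : μ₀ (K * ρ) = 0) :
    ∀ Pr : NA → NA,
      Pr = (fun x => -(sMap μ₀ S MonoP (sMap μ₀ S MonoM x))) →
      (∀ x : NA, Pr (Pr x) = Pr x) ∧
      (∀ x : NA, Pr x = -(sMap μ₀ S MonoM (sMap μ₀ S MonoP x))) ∧
      (∀ x ∈ ΛE, Pr x = x) ∧
      (∀ x ∈ ΛE, Pr (K * x) = 0) ∧
      Set.range Pr = (ΛE : Set NA) ∧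
      {x : NA | Pr x = 0} = (Submodule.span ℝ {K, K * θ, K * θb, K * ρ} : Set NA) :=
  stmt12_general S hSmul hSK hSθ hSθb μ₀ hμ1 hμθ hμθb hμρ hμK hμKθ hμKθb hμKρ
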